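/- Define χ₀ ∈ X̄ by χ₀ = (r₀, s₀, r₀, 1) if s₀ ∈ Λ and χ₀ = (r₀, s₀, σ₀, ⌊1−τ₀⌋_T) if s₀ ∉ Λ. Then ℙ(r̄(0) = χ₀) = 1, and for every k ≥ 1 and every χ₁, …, χ_k ∈ X̄ one has ℙ(r̄(0)=χ₀, r̄(1)=χ₁, …, r̄(k)=χ_k) = ∏_{j=0}^{k−1} p̄_{χ_j, χ_{j+1}}. In other words, r̄ has the same finite-dimensional distributions as a time-homogeneous Markov chain on X̄ with transition matrix p̄ started at the deterministic state χ₀. -/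

import Mathlib

open MeasureTheory ProbabilityTheory

/-- `flT T k : Fin T` represents `⌊k⌋_T`, the unique element of `{1,…,T}` such that
`k − ⌊k⌋_T` is divisible by `T`; the element `d : Fin T` encodes the value `d.val + 1`. -/
def flT (T : ℕ) [NeZero T] (k : ℤ) : Fin T :=
  ⟨((k - 1) % (T : ℤ)).toNat, by
    have hT : (0:ℤ) < (T:ℤ) := by exact_mod_cast Nat.pos_of_ne_zero (NeZero.ne T)
    have h1 : 0 ≤ (k - 1) % (T:ℤ) := Int.emod_nonneg _ (ne_of_gt hT)
    have h2 : (k - 1) % (T:ℤ) < (T:ℤ) := Int.emod_lt_of_pos _ hT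
    omega⟩

/-- `τ(k)`: the most recent observation time `≤ k`, i.e. the largest `j ≤ k` with
`s j ∈ Λ`, and `τ₀` if no observation has occurred yet. -/
noncomputable def tauProc {M : ℕ} {Ω : Type*} (Λ : Set (Fin M)) (s : ℕ → Ω → Fin M)
    (τ0 : ℤ) (k : ℕ) (ω : Ω) : ℤ := by
  classical
  exact if ∃ j ≤ k, s j ω ∈ Λ then
    ((Nat.findGreatest (fun j => s j ω ∈ Λ) k : ℕ) : ℤ) else τ0

/-- `σ(k) = r(τ(k))` for `k ≥ t₀` and `σ₀` before the first observation. -/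
noncomputable def sigmaProc {N M : ℕ} {Ω : Type*} (Λ : Set (Fin M))
    (r : ℕ → Ω → Fin N) (s : ℕ → Ω → Fin M) (σ0 : Fin N) (k : ℕ) (ω : Ω) : Fin N := by
  classical
  exact if ∃ j ≤ k, s j ω ∈ Λ then r (Nat.findGreatest (fun j => s j ω ∈ Λ) k) ω else σ0

/-- The extended process `r̄(k) = (r(k), s(k), σ(k), ⌊k+1−τ(k)⌋_T)`. -/
noncomputable def rbar {N M : ℕ} (T : ℕ) [NeZero T] {Ω : Type*} (Λ : Set (Fin M))
    (r : ℕ → Ω → Fin N) (s : ℕ → Ω → Fin M) (τ0 : ℤ) (σ0 : Fin N) (k : ℕ) (ω : Ω) :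
    Fin N × Fin M × Fin N × Fin T :=
  (r k ω, s k ω, sigmaProc Λ r s σ0 k ω, flT T ((k : ℤ) + 1 - tauProc Λ s τ0 k ω))

/-- The transition matrix `p̄` on `X̄ = {1,…,N} × {1,…,M} × {1,…,N} × {1,…,T}`.
Recall that `δ : Fin T` encodes the value `δ.val + 1`, so `flT T 1 = 0` encodes the
value `1` and `δ + 1` (cyclic `Fin` addition) encodes `⌊δ + 1⌋_T`. -/
noncomputable def pbar {N M T : ℕ} [NeZero T] (P : Matrix (Fin N) (Fin N) ℝ)
    (Q : Matrix (Fin M) (Fin M) ℝ) (Λ : Set (Fin M))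
    (χ χ' : Fin N × Fin M × Fin N × Fin T) : ℝ := by
  classical
  exact
    if χ'.2.1 ∈ Λ then
      if χ'.1 = χ'.2.2.1 ∧ χ'.2.2.2 = flT T 1 then P χ.1 χ'.1 * Q χ.2.1 χ'.2.1 else 0
    else
      if χ'.2.2.1 = χ.2.2.1 ∧ χ'.2.2.2 = χ.2.2.2 + 1 then P χ.1 χ'.1 * Q χ.2.1 χ'.2.1 else 0

/-- A row-stochastic matrix. -/
def RowStochastic {I : Type*} [Fintype I] (P : I → I → ℝ) : Prop :=
  (∀ i j, 0 ≤ P i j) ∧ ∀ i, ∑ j, P i j = 1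

/-- The pair `(r, s)` is a time-homogeneous Markov chain with product transition
probabilities `P ⊗ Q`: conditional on any history of positive probability. -/
def IsPairMarkov {N M : ℕ} {Ω : Type*} [MeasurableSpace Ω] (μ : Measure Ω)
    (r : ℕ → Ω → Fin N) (s : ℕ → Ω → Fin M)
    (P : Matrix (Fin N) (Fin N) ℝ) (Q : Matrix (Fin M) (Fin M) ℝ) : Prop :=
  ∀ (k : ℕ) (a : ℕ → Fin N) (b : ℕ → Fin M),
    μ {ω | ∀ j ≤ k, r j ω = a j ∧ s j ω = b j} ≠ 0 →
    ∀ (α' : Fin N) (β' : Fin M),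
      ProbabilityTheory.cond μ {ω | ∀ j ≤ k, r j ω = a j ∧ s j ω = b j}
          {ω | r (k+1) ω = α' ∧ s (k+1) ω = β'}
        = ENNReal.ofReal (P (a k) α' * Q (b k) β')

/-- A time-homogeneous Markov chain on a (finite) state space `S` with transition
matrix `P`. -/
def IsMarkov {S : Type*} {Ω : Type*} [MeasurableSpace Ω] (μ : Measure Ω)
    (X : ℕ → Ω → S) (P : S → S → ℝ) : Prop :=
  ∀ (k : ℕ) (c : ℕ → S),
    μ {ω | ∀ i ≤ k, X i ω = c i} ≠ 0 →
    ∀ j : S,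
      ProbabilityTheory.cond μ {ω | ∀ i ≤ k, X i ω = c i} {ω | X (k+1) ω = j}
        = ENNReal.ofReal (P (c k) j)

/-!
The last two components of `r̄` are updated deterministically from their previous values and the
new state of `(r, s)`: at an observation they restart at `(r(k+1), 1)`, otherwise `σ` is kept and
the phase advances by one. Hence `{r̄(0) = χ₀, …, r̄(k) = χ_k}` is either empty, when the `χ_j` do
not follow this update and some factor `p̄_{χ_j, χ_{j+1}}` vanishes, or equal to the cylinder
event of `(r, s)` along the first two components of the `χ_j`, whose probability is the product
of the `P ⊗ Q` transitions.
-/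

open Finset
open scoped Kronecker

theorem ENNReal.eq_of_le_of_sum_le {ι : Type*} {s : Finset ι} {f g : ι → ENNReal}
    (hgf : ∀ i ∈ s, g i ≤ f i) (hsum : ∑ i ∈ s, f i ≤ ∑ i ∈ s, g i)
    (hfin : ∑ i ∈ s, f i ≠ ⊤) {i : ι} (hi : i ∈ s) : g i = f i := by
  classical
  refine le_antisymm (hgf i hi) ?_
  have hrest : ∑ j ∈ s.erase i, f j ≠ ⊤ :=
    ne_top_of_le_ne_top hfin (sum_le_sum_of_subset (erase_subset i s))
  refine ENNReal.le_of_add_le_add_right hrest ?_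
  calc f i + ∑ j ∈ s.erase i, f j = ∑ j ∈ s, f j := add_sum_erase s f hi
    _ ≤ ∑ j ∈ s, g j := hsum
    _ = g i + ∑ j ∈ s.erase i, g j := (add_sum_erase s g hi).symm
    _ ≤ g i + ∑ j ∈ s.erase i, f j :=
      by gcongr with j hj; exact hgf j (mem_of_mem_erase hj)

/-- Without measurability, `μ[B | A]` only bounds `μ (A ∩ B)` from above; the bounds for a finite
cover of `A` whose conditional probabilities add up to one are then forced to be equalities. -/
theorem MeasureTheory.measure_inter_eq_mul_of_cond_eq {Ω ι : Type*} [MeasurableSpace Ω]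
    [Fintype ι] (μ : Measure Ω) [IsFiniteMeasure μ] {A : Set Ω} (hA : μ A ≠ 0)
    {B : ι → Set Ω} (hcover : A ⊆ ⋃ i, B i) {c : ι → ENNReal} (hc : ∑ i, c i = 1)
    (hcond : ∀ i, μ[B i | A] = c i) (i : ι) : μ (A ∩ B i) = c i * μ A := by
  have hle : ∀ j ∈ univ, μ (A ∩ B j) ≤ c j * μ A := fun j _ => calc
    μ (A ∩ B j) = μ (B j ∩ A) := by rw [Set.inter_comm]
    _ ≤ μ.restrict A (B j) := Measure.le_restrict_apply _ _
    _ = c j * μ A := by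
      rw [← hcond j, ProbabilityTheory.cond, Measure.smul_apply, smul_eq_mul, mul_comm,
        ← mul_assoc, ENNReal.mul_inv_cancel hA (measure_ne_top μ A), one_mul]
  have htotal : ∑ j, c j * μ A = μ A := by rw [← sum_mul, hc, one_mul]
  have hsum : ∑ j, c j * μ A ≤ ∑ j, μ (A ∩ B j) := calc
    ∑ j, c j * μ A = μ (⋃ j, A ∩ B j) := by
      rw [htotal, ← Set.inter_iUnion, Set.inter_eq_left.mpr hcover]
    _ ≤ ∑ j, μ (A ∩ B j) := measure_iUnion_fintype_le μ _
  exact ENNReal.eq_of_le_of_sum_le hle hsum (htotal.symm ▸ measure_ne_top μ A) (mem_univ i)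

theorem RowStochastic.kronecker {I J : Type*} [Fintype I] [Fintype J]
    {P : Matrix I I ℝ} {Q : Matrix J J ℝ} (hP : RowStochastic P) (hQ : RowStochastic Q) :
    RowStochastic (P ⊗ₖ Q) := by
  refine ⟨fun i j => mul_nonneg (hP.1 _ _) (hQ.1 _ _), fun ⟨i₁, i₂⟩ => ?_⟩
  simp only [Matrix.kronecker_apply, Fintype.sum_prod_type, ← mul_sum, ← sum_mul, hP.2, hQ.2,
    one_mul]

theorem Nat.forall_le_add_one_iff {p : ℕ → Prop} {k : ℕ} :
    (∀ j ≤ k + 1, p j) ↔ (∀ j ≤ k, p j) ∧ p (k + 1) := by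
  simpa only [← Nat.lt_succ_iff] using Nat.forall_lt_succ_right

theorem setOf_forall_le_add_one {Ω : Type*} (p : ℕ → Ω → Prop) (k : ℕ) :
    {ω | ∀ j ≤ k + 1, p j ω} = {ω | ∀ j ≤ k, p j ω} ∩ {ω | p (k + 1) ω} :=
  Set.ext fun _ => Nat.forall_le_add_one_iff

theorem IsMarkov.measure_cylinder {S Ω : Type*} [Fintype S] [MeasurableSpace Ω]
    {μ : Measure Ω} [IsProbabilityMeasure μ] {X : ℕ → Ω → S} {p : S → S → ℝ}
    (hX : IsMarkov μ X p) (hp : RowStochastic p) {x₀ : S} (hX₀ : ∀ ω, X 0 ω = x₀)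
    (x : ℕ → S) (hx : x 0 = x₀) (k : ℕ) :
    μ {ω | ∀ j ≤ k, X j ω = x j} = ENNReal.ofReal (∏ j ∈ range k, p (x j) (x (j + 1))) := by
  induction k with
  | zero =>
    have huniv : {ω | ∀ j ≤ 0, X j ω = x j} = Set.univ :=
      Set.eq_univ_of_forall fun ω j hj => by rw [Nat.le_zero.mp hj, hX₀, hx]
    rw [huniv, measure_univ, prod_range_zero, ENNReal.ofReal_one]
  | succ k ih =>
    set A := {ω | ∀ j ≤ k, X j ω = x j}
    rw [setOf_forall_le_add_one, prod_range_succ,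
      ENNReal.ofReal_mul (prod_nonneg fun j _ => hp.1 _ _), ← ih, mul_comm]
    by_cases hA : μ A = 0
    · rw [hA, mul_zero]
      exact measure_mono_null Set.inter_subset_left hA
    have hc : ∑ y, ENNReal.ofReal (p (x k) y) = 1 := by
      rw [← ENNReal.ofReal_sum_of_nonneg fun y _ => hp.1 _ _, hp.2, ENNReal.ofReal_one]
    exact measure_inter_eq_mul_of_cond_eq μ hA (B := fun y => {ω | X (k + 1) ω = y})
      (fun ω _ => Set.mem_iUnion.mpr ⟨X (k + 1) ω, rfl⟩) hc (hX k x hA) (x (k + 1))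

theorem IsPairMarkov.isMarkov {N M : ℕ} {Ω : Type*} [MeasurableSpace Ω] {μ : Measure Ω}
    {r : ℕ → Ω → Fin N} {s : ℕ → Ω → Fin M} {P : Matrix (Fin N) (Fin N) ℝ}
    {Q : Matrix (Fin M) (Fin M) ℝ} (h : IsPairMarkov μ r s P Q) :
    IsMarkov μ (fun k ω => (r k ω, s k ω)) (P ⊗ₖ Q) := by
  intro k c hc y
  simp only [Prod.ext_iff] at hc ⊢
  exact h k (fun j => (c j).1) (fun j => (c j).2) hc y.1 y.2

theorem flT_add_one (T : ℕ) [NeZero T] (k : ℤ) : flT T (k + 1) = flT T k + 1 := by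
  apply Fin.ext
  have hT : (T : ℤ) ≠ 0 := by exact_mod_cast NeZero.ne T
  simp only [flT, Fin.val_add, Fin.val_one', add_sub_cancel_right]
  zify
  rw [Int.toNat_of_nonneg (Int.emod_nonneg _ hT), Int.toNat_of_nonneg (Int.emod_nonneg _ hT),
    ← Int.add_emod, sub_add_cancel]

section LastObservation

variable {N M : ℕ} {Ω : Type*} {Λ : Set (Fin M)} {r : ℕ → Ω → Fin N} {s : ℕ → Ω → Fin M}
  {ω : Ω} {k : ℕ}

theorem tauProc_zero_of_mem (τ0 : ℤ) (h : s 0 ω ∈ Λ) : tauProc Λ s τ0 0 ω = 0 := by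
  simp [tauProc, h]

theorem tauProc_zero_of_notMem (τ0 : ℤ) (h : s 0 ω ∉ Λ) : tauProc Λ s τ0 0 ω = τ0 := by
  simp [tauProc, h]

theorem sigmaProc_zero_of_mem (σ0 : Fin N) (h : s 0 ω ∈ Λ) : sigmaProc Λ r s σ0 0 ω = r 0 ω := by
  simp [sigmaProc, h]

theorem sigmaProc_zero_of_notMem (σ0 : Fin N) (h : s 0 ω ∉ Λ) : sigmaProc Λ r s σ0 0 ω = σ0 := by
  simp [sigmaProc, h]

theorem tauProc_succ_of_mem (τ0 : ℤ) (h : s (k + 1) ω ∈ Λ) :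
    tauProc Λ s τ0 (k + 1) ω = k + 1 := by
  classical
  rw [tauProc, if_pos ⟨k + 1, le_rfl, h⟩, Nat.findGreatest_eq h]
  push_cast
  rfl

theorem tauProc_succ_of_notMem (τ0 : ℤ) (h : s (k + 1) ω ∉ Λ) :
    tauProc Λ s τ0 (k + 1) ω = tauProc Λ s τ0 k ω := by
  classical
  simp [tauProc, Nat.le_succ_iff, or_and_right, exists_or, h]

theorem sigmaProc_succ_of_mem (σ0 : Fin N) (h : s (k + 1) ω ∈ Λ) :
    sigmaProc Λ r s σ0 (k + 1) ω = r (k + 1) ω := by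
  classical
  rw [sigmaProc, if_pos ⟨k + 1, le_rfl, h⟩, Nat.findGreatest_eq h]

theorem sigmaProc_succ_of_notMem (σ0 : Fin N) (h : s (k + 1) ω ∉ Λ) :
    sigmaProc Λ r s σ0 (k + 1) ω = sigmaProc Λ r s σ0 k ω := by
  classical
  simp [sigmaProc, Nat.le_succ_iff, or_and_right, exists_or, h]

end LastObservation

open Classical in
noncomputable def rbarStep {N M T : ℕ} [NeZero T] (Λ : Set (Fin M))
    (χ : Fin N × Fin M × Fin N × Fin T) (y : Fin N × Fin M) : Fin N × Fin M × Fin N × Fin T :=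
  if y.2 ∈ Λ then (y.1, y.2, y.1, flT T 1) else (y.1, y.2, χ.2.2.1, χ.2.2.2 + 1)

section Rbar

variable {N M : ℕ} (T : ℕ) [NeZero T] {Ω : Type*} {Λ : Set (Fin M)} {r : ℕ → Ω → Fin N}
  {s : ℕ → Ω → Fin M} (τ0 : ℤ) (σ0 : Fin N) {ω : Ω}

theorem rbar_zero_of_mem (h : s 0 ω ∈ Λ) :
    rbar T Λ r s τ0 σ0 0 ω = (r 0 ω, s 0 ω, r 0 ω, flT T 1) := by
  simp [rbar, sigmaProc_zero_of_mem σ0 h, tauProc_zero_of_mem τ0 h]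

theorem rbar_zero_of_notMem (h : s 0 ω ∉ Λ) :
    rbar T Λ r s τ0 σ0 0 ω = (r 0 ω, s 0 ω, σ0, flT T (1 - τ0)) := by
  simp [rbar, sigmaProc_zero_of_notMem σ0 h, tauProc_zero_of_notMem τ0 h]

theorem rbar_succ (k : ℕ) :
    rbar T Λ r s τ0 σ0 (k + 1) ω
      = rbarStep Λ (rbar T Λ r s τ0 σ0 k ω) (r (k + 1) ω, s (k + 1) ω) := by
  by_cases h : s (k + 1) ω ∈ Λ
  · rw [rbarStep, if_pos h, rbar, sigmaProc_succ_of_mem σ0 h, tauProc_succ_of_mem τ0 h]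
    push_cast
    rw [add_sub_cancel_left]
  · rw [rbarStep, if_neg h, rbar, rbar, sigmaProc_succ_of_notMem σ0 h,
      tauProc_succ_of_notMem τ0 h, ← flT_add_one]
    push_cast
    ring_nf

end Rbar

theorem pbar_eq_ite {N M T : ℕ} [NeZero T] (P : Matrix (Fin N) (Fin N) ℝ)
    (Q : Matrix (Fin M) (Fin M) ℝ) (Λ : Set (Fin M)) (χ χ' : Fin N × Fin M × Fin N × Fin T) :
    pbar P Q Λ χ χ' = if χ' = rbarStep Λ χ (χ'.1, χ'.2.1)
      then (P ⊗ₖ Q) (χ.1, χ.2.1) (χ'.1, χ'.2.1) else 0 := by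
  obtain ⟨α', β', γ', δ'⟩ := χ'
  by_cases h : β' ∈ Λ
  · simp [pbar, rbarStep, h, eq_comm]
  · simp [pbar, rbarStep, h]

section Augmentation

variable {Ω E S : Type*} {X : ℕ → Ω → E} {π : E → S} {G : E → S → E} {x₀ : E}

theorem forall_le_eq_iff_of_recursive (hX : ∀ k ω, X (k + 1) ω = G (X k ω) (π (X (k + 1) ω)))
    (hX₀ : ∀ ω, X 0 ω = x₀) {x : ℕ → E} (hx : x 0 = x₀) (ω : Ω) (k : ℕ) :
    (∀ j ≤ k, X j ω = x j) ↔
      (∀ j ≤ k, π (X j ω) = π (x j)) ∧ ∀ j < k, x (j + 1) = G (x j) (π (x (j + 1))) := by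
  induction k with
  | zero => simp [hX₀, hx]
  | succ k ih =>
    rw [Nat.forall_le_add_one_iff, Nat.forall_le_add_one_iff, Nat.forall_lt_succ_right]
    constructor
    · rintro ⟨hpast, hnow⟩
      obtain ⟨hπ, hG⟩ := ih.mp hpast
      refine ⟨⟨hπ, congrArg π hnow⟩, hG, ?_⟩
      rw [← hnow, ← hpast k le_rfl]
      exact hX k ω
    · rintro ⟨⟨hπ, hπnow⟩, hG, hGnow⟩
      have hpast := ih.mpr ⟨hπ, hG⟩
      refine ⟨hpast, ?_⟩
      rw [hX, hpast k le_rfl, hπnow]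
      exact hGnow.symm

theorem IsMarkov.measure_cylinder_of_recursive [DecidableEq E] [Fintype S] [MeasurableSpace Ω]
    {μ : Measure Ω} [IsProbabilityMeasure μ] {p : S → S → ℝ}
    (hY : IsMarkov μ (fun k ω => π (X k ω)) p) (hp : RowStochastic p)
    (hX : ∀ k ω, X (k + 1) ω = G (X k ω) (π (X (k + 1) ω))) (hX₀ : ∀ ω, X 0 ω = x₀)
    (x : ℕ → E) (hx : x 0 = x₀) (k : ℕ) :
    μ {ω | ∀ j ≤ k, X j ω = x j} = ENNReal.ofReal (∏ j ∈ range k,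
      if x (j + 1) = G (x j) (π (x (j + 1))) then p (π (x j)) (π (x (j + 1))) else 0) := by
  have hiff := forall_le_eq_iff_of_recursive hX hX₀ hx
  rw [prod_ite_zero]
  split_ifs with hG
  · have hcyl : {ω | ∀ j ≤ k, X j ω = x j} = {ω | ∀ j ≤ k, π (X j ω) = π (x j)} :=
      Set.ext fun ω => (hiff ω k).trans (and_iff_left fun j hj => hG j (mem_range.mpr hj))
    rw [hcyl]
    exact hY.measure_cylinder hp (fun ω => congrArg π (hX₀ ω)) (fun j => π (x j))
      (congrArg π hx) k
  · rw [ENNReal.ofReal_zero]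
    exact measure_mono_null (fun ω hω => (hG fun j hj => ((hiff ω k).mp hω).2 j
      (mem_range.mp hj)).elim) measure_empty

end Augmentation

theorem rbar_finite_dimensional_distributions_general
    {N M T : ℕ} [NeZero T]
    (P : Matrix (Fin N) (Fin N) ℝ) (Q : Matrix (Fin M) (Fin M) ℝ)
    (hP : RowStochastic P) (hQ : RowStochastic Q)
    (Λ : Set (Fin M))
    (Ω : Type) [MeasurableSpace Ω] (μ : Measure Ω) [IsProbabilityMeasure μ]
    (r : ℕ → Ω → Fin N) (s : ℕ → Ω → Fin M) (r₀ : Fin N) (s₀ : Fin M)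
    (hr0 : ∀ ω, r 0 ω = r₀) (hs0 : ∀ ω, s 0 ω = s₀)
    (hMarkov : IsPairMarkov μ r s P Q)
    (τ₀ : ℤ) (σ₀ : Fin N)
    (χ₀ : Fin N × Fin M × Fin N × Fin T)
    (hχ₀mem : s₀ ∈ Λ → χ₀ = (r₀, s₀, r₀, flT T 1))
    (hχ₀nmem : s₀ ∉ Λ → χ₀ = (r₀, s₀, σ₀, flT T (1 - τ₀))) :
    μ {ω | rbar T Λ r s τ₀ σ₀ 0 ω = χ₀} = 1 ∧
    ∀ k : ℕ, 1 ≤ k → ∀ χ : ℕ → Fin N × Fin M × Fin N × Fin T, χ 0 = χ₀ →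
      μ {ω | ∀ j ≤ k, rbar T Λ r s τ₀ σ₀ j ω = χ j}
        = ENNReal.ofReal (∏ j ∈ Finset.range k, pbar P Q Λ (χ j) (χ (j+1))) := by
  have hstart : ∀ ω, rbar T Λ r s τ₀ σ₀ 0 ω = χ₀ := by
    intro ω
    by_cases h : s₀ ∈ Λ
    · rw [rbar_zero_of_mem T τ₀ σ₀ (hs0 ω ▸ h), hr0, hs0, hχ₀mem h]
    · rw [rbar_zero_of_notMem T τ₀ σ₀ (hs0 ω ▸ h), hr0, hs0, hχ₀nmem h]
  refine ⟨by simp [hstart], fun k _ χ hχ => ?_⟩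
  simp only [pbar_eq_ite]
  exact hMarkov.isMarkov.measure_cylinder_of_recursive (π := fun χ => (χ.1, χ.2.1))
    (hP.kronecker hQ) (fun k _ => rbar_succ T τ₀ σ₀ k) hstart χ hχ k

/-- With `χ₀ = (r₀, s₀, r₀, 1)` if `s₀ ∈ Λ` and
`χ₀ = (r₀, s₀, σ₀, ⌊1 − τ₀⌋_T)` if `s₀ ∉ Λ`, one has `ℙ(r̄(0) = χ₀) = 1`, and for
every `k ≥ 1` and every `χ₁, …, χ_k ∈ X̄`,
`ℙ(r̄(0)=χ₀, …, r̄(k)=χ_k) = ∏_{j=0}^{k−1} p̄_{χ_j, χ_{j+1}}`; i.e. `r̄` has the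
finite-dimensional distributions of a time-homogeneous Markov chain with transition
matrix `p̄` started at the deterministic state `χ₀`. -/
theorem rbar_finite_dimensional_distributions
    {n m N M T : ℕ} [NeZero n] [NeZero m] [NeZero N] [NeZero M] [NeZero T]
    (P : Matrix (Fin N) (Fin N) ℝ) (Q : Matrix (Fin M) (Fin M) ℝ)
    (hP : RowStochastic P) (hQ : RowStochastic Q)
    (Λ : Set (Fin M)) (hΛ : Λ.Nonempty)
    (Ω : Type) [MeasurableSpace Ω] (μ : Measure Ω) [IsProbabilityMeasure μ]
    (r : ℕ → Ω → Fin N) (s : ℕ → Ω → Fin M) (r₀ : Fin N) (s₀ : Fin M)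
    (hr0 : ∀ ω, r 0 ω = r₀) (hs0 : ∀ ω, s 0 ω = s₀)
    (hMarkov : IsPairMarkov μ r s P Q)
    (hinf : μ {ω | {k : ℕ | s k ω ∈ Λ}.Infinite} = 1)
    (τ₀ : ℤ) (hτ₀ : τ₀ < 0) (σ₀ : Fin N)
    (χ₀ : Fin N × Fin M × Fin N × Fin T)
    (hχ₀mem : s₀ ∈ Λ → χ₀ = (r₀, s₀, r₀, flT T 1))
    (hχ₀nmem : s₀ ∉ Λ → χ₀ = (r₀, s₀, σ₀, flT T (1 - τ₀))) :
    μ {ω | rbar T Λ r s τ₀ σ₀ 0 ω = χ₀} = 1 ∧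
    ∀ k : ℕ, 1 ≤ k → ∀ χ : ℕ → Fin N × Fin M × Fin N × Fin T, χ 0 = χ₀ →
      μ {ω | ∀ j ≤ k, rbar T Λ r s τ₀ σ₀ j ω = χ j}
        = ENNReal.ofReal (∏ j ∈ Finset.range k, pbar P Q Λ (χ j) (χ (j+1))) :=
  rbar_finite_dimensional_distributions_general P Q hP hQ Λ Ω μ r s r₀ s₀ hr0 hs0 hMarkov τ₀ σ₀ χ₀
    hχ₀mem hχ₀nmem
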